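/- Let Δ in E and Δ̃ in Ẽ be two finite reduced crystallographic root systems with Weyl groups W, W̃, positive systems Δ⁺, Δ̃⁺, half-sums of positive roots ρ, ρ̃, weight lattices P, P̃ and dominant monoids P⁺, P̃⁺. Let f : Ẽ → E be a linear map with f(P̃) ⊆ P, and let w ∈ W and w̃ ∈ W̃ satisfy f(⟨Φ_{w̃}⟩) = ⟨Φ_w⟩, where Φ denotes inversion sets and ⟨Φ⟩ the sum of the elements of Φ. Then the set D_{w,w̃} = {(μ, μ̃) ∈ P⁺ × P̃⁺ : μ = w·(f(w̃⁻¹·μ̃))} (dot denoting the respective affine actions) is a finitely generated submonoid of the additive monoid P⁺ × P̃⁺. -/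

import Mathlib

open scoped InnerProductSpace Classical

/-- A finite reduced crystallographic root system, together with a fixed positive system
(cut out by a linear functional not vanishing on any root), in a real inner product space. -/
structure RootSystemData (E : Type*) [NormedAddCommGroup E] [InnerProductSpace ℝ E] where
  roots : Finset E
  zero_not_mem : (0 : E) ∉ roots
  span_top : Submodule.span ℝ (roots : Set E) = ⊤
  reduced : ∀ α ∈ roots, ∀ t : ℝ, t • α ∈ roots → t = 1 ∨ t = -1
  crystallographic : ∀ α ∈ roots, ∀ β ∈ roots, ∃ n : ℤ, 2 * ⟪β, α⟫_ℝ / ⟪α, α⟫_ℝ = (n : ℝ)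
  reflect_mem : ∀ α ∈ roots, ∀ β ∈ roots, β - (2 * ⟪β, α⟫_ℝ / ⟪α, α⟫_ℝ) • α ∈ roots
  posFun : E →ₗ[ℝ] ℝ
  posFun_ne_zero : ∀ α ∈ roots, posFun α ≠ 0

namespace RootSystemData

variable {E : Type*} [NormedAddCommGroup E] [InnerProductSpace ℝ E] [FiniteDimensional ℝ E]

/-- The orthogonal reflection along the root `α` (reflection through the hyperplane `α^⊥`). -/
noncomputable def reflect (α : E) : E ≃ₗᵢ[ℝ] E := Submodule.reflection (ℝ ∙ α)ᗮ

variable (R : RootSystemData E)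

/-- The Weyl group: the group of isometries generated by the reflections along the roots. -/
noncomputable def weyl : Subgroup (E ≃ₗᵢ[ℝ] E) :=
  Subgroup.closure { s | ∃ α ∈ R.roots, s = reflect α }

/-- The positive roots `Δ⁺`. -/
noncomputable def pos : Finset E := R.roots.filter fun α => 0 < R.posFun α

/-- `ρ`, the half-sum of the positive roots. -/
noncomputable def rho : E := (2 : ℝ)⁻¹ • ∑ α ∈ R.pos, α

/-- The inversion set `Φ_w = Δ⁺ ∩ w⁻¹(Δ⁻)`. -/
noncomputable def inv (w : E ≃ₗᵢ[ℝ] E) : Finset E :=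
  R.pos.filter fun α => -(w α) ∈ R.pos

/-- `⟨Φ_w⟩`, the sum of the elements of the inversion set of `w`. -/
noncomputable def invSum (w : E ≃ₗᵢ[ℝ] E) : E := ∑ α ∈ R.inv w, α

/-- The length of `w`, i.e. the cardinality of its inversion set. -/
noncomputable def len (w : E ≃ₗᵢ[ℝ] E) : ℕ := (R.inv w).card

/-- The affine (dot) action `w · λ = w(λ + ρ) - ρ`. -/
noncomputable def dot (w : E ≃ₗᵢ[ℝ] E) (l : E) : E := w (l + R.rho) - R.rho

/-- Membership in the weight lattice `𝒫`. -/
def IsWeight (l : E) : Prop :=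
  ∀ α ∈ R.roots, ∃ n : ℤ, 2 * ⟪l, α⟫_ℝ / ⟪α, α⟫_ℝ = (n : ℝ)

/-- Membership in the dominant monoid `𝒫⁺`. -/
def IsDominant (l : E) : Prop :=
  R.IsWeight l ∧ ∀ α ∈ R.pos, 0 ≤ ⟪l, α⟫_ℝ

/-- The simple roots: the indecomposable positive roots. -/
noncomputable def simples : Finset E :=
  R.pos.filter fun α => ¬ ∃ β ∈ R.pos, ∃ γ ∈ R.pos, α = β + γ

end RootSystemData

/-!
Since `w⁻¹ ρ = ρ - ⟨Φ_w⟩` for every `w ∈ W`, the hypothesis `f ⟨Φ_w̃⟩ = ⟨Φ_w⟩` turns the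
affine condition into a linear one: `w·(f(w̃⁻¹·μ̃)) = g μ̃` with `g = w ∘ f ∘ w̃⁻¹`. Hence
`D_{w,w̃}` is the graph of `g` over the monoid `M` of dominant `μ̃` with `g μ̃` dominant.

A vector is a dominant weight exactly when its pairings with the positive coroots are natural
numbers, and these pairings determine it (the roots span). So `M` is the preimage of `ℕ^k` under
an injective linear map to `ℝ^k`, and its image in `ℕ^k` is closed under differences of comparable
elements; Dickson's lemma (`AddSubmonoid.fg_of_subtractive`) makes it finitely generated.
-/

theorem AddSubmonoid.fg_comap_mrange_of_injective {N G H : Type*} [AddCommMonoid N]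
    [PartialOrder N] [WellQuasiOrderedLE N] [IsOrderedCancelAddMonoid N] [CanonicallyOrderedAdd N]
    [AddGroup G] [AddGroup H] (c : G →+ H) (hc : Function.Injective c) (φ : N →+ H) :
    ((AddMonoidHom.mrange φ).comap c).FG := by
  have hsub : ((AddMonoidHom.mrange c).comap φ).FG := by
    refine AddSubmonoid.fg_of_subtractive ?_
    rintro x ⟨a, ha⟩ y ⟨b, hb⟩
    refine ⟨-a + b, ?_⟩
    rw [map_add, map_neg, ha, hb, map_add, neg_add_cancel_left]
  refine AddSubmonoid.FG.map_injective c hc ?_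
  convert hsub.map φ using 1
  ext y
  simp only [AddSubmonoid.mem_map, AddSubmonoid.mem_comap, AddMonoidHom.mem_mrange]
  constructor
  · rintro ⟨x, ⟨u, hu⟩, rfl⟩
    exact ⟨u, ⟨x, hu.symm⟩, hu⟩
  · rintro ⟨u, ⟨x, hx⟩, rfl⟩
    exact ⟨x, ⟨u, hx.symm⟩, hx⟩

theorem AddMonoidHom.mem_mrange_compLeft_natCast {ι : Type*} {v : ι → ℝ} :
    v ∈ AddMonoidHom.mrange ((Nat.castAddMonoidHom ℝ).compLeft ι) ↔ ∀ i, ∃ n : ℕ, (n : ℝ) = v i :=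
  ⟨by rintro ⟨u, rfl⟩ i; exact ⟨u i, rfl⟩, fun h => by choose u hu using h; exact ⟨u, funext hu⟩⟩

namespace RootSystemData

variable {E : Type*} [NormedAddCommGroup E] [InnerProductSpace ℝ E]

noncomputable def coroot (α : E) : E →ₗ[ℝ] ℝ where
  toFun l := 2 * ⟪l, α⟫_ℝ / ⟪α, α⟫_ℝ
  map_add' l l' := by rw [inner_add_left]; ring
  map_smul' t l := by rw [real_inner_smul_left]; simp only [smul_eq_mul, RingHom.id_apply]; ring

theorem coroot_apply (α l : E) : coroot α l = 2 * ⟪l, α⟫_ℝ / ⟪α, α⟫_ℝ := rfl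

theorem coroot_neg (α l : E) : coroot (-α) l = -coroot α l := by
  simp only [coroot_apply, inner_neg_right, inner_neg_left, neg_neg]
  ring

theorem reflect_apply (α β : E) : reflect α β = β - coroot α β • α := by
  rw [reflect, Submodule.reflection_apply, Submodule.starProjection_orthogonal_val,
    Submodule.starProjection_singleton, coroot_apply]
  simp only [RCLike.ofReal_real_eq_id, id_eq]
  rw [real_inner_self_eq_norm_sq, real_inner_comm β α, two_smul]
  module

variable (R : RootSystemData E)

theorem ne_zero_of_mem_roots {α : E} (hα : α ∈ R.roots) : α ≠ 0 :=
  fun h => R.zero_not_mem (h ▸ hα)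

theorem inner_self_pos {α : E} (hα : α ∈ R.roots) : 0 < ⟪α, α⟫_ℝ :=
  real_inner_self_pos.2 (R.ne_zero_of_mem_roots hα)

theorem neg_mem_roots {α : E} (hα : α ∈ R.roots) : -α ∈ R.roots := by
  have h := R.reflect_mem α hα α hα
  rwa [mul_div_assoc, div_self (R.inner_self_pos hα).ne', mul_one, two_smul, sub_add_cancel_left]
    at h

theorem pos_subset_roots : R.pos ⊆ R.roots := Finset.filter_subset _ _

theorem neg_notMem_pos {α : E} (hα : α ∈ R.pos) : -α ∉ R.pos := by
  simp only [pos, Finset.mem_filter, map_neg, Left.neg_pos_iff, not_and, not_lt] at hα ⊢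
  exact fun _ => hα.2.le

theorem mem_roots_iff {α : E} : α ∈ R.roots ↔ α ∈ R.pos ∨ -α ∈ R.pos := by
  simp only [pos, Finset.mem_filter, map_neg, Left.neg_pos_iff]
  refine ⟨fun hα => ?_, ?_⟩
  · rcases (R.posFun_ne_zero α hα).lt_or_gt with h | h
    · exact Or.inr ⟨R.neg_mem_roots hα, h⟩
    · exact Or.inl ⟨hα, h⟩
  · rintro (h | h)
    · exact h.1
    · simpa using R.neg_mem_roots h.1

def rootStabilizer : Subgroup (E ≃ₗᵢ[ℝ] E) where
  carrier := {w | ∀ α, w α ∈ R.roots ↔ α ∈ R.roots}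
  mul_mem' hw hw' α := (hw _).trans (hw' α)
  one_mem' _ := Iff.rfl
  inv_mem' {w} hw α := by
    rw [← hw, LinearIsometryEquiv.coe_inv, LinearIsometryEquiv.apply_symm_apply]

theorem reflect_mem_rootStabilizer {α : E} (hα : α ∈ R.roots) :
    reflect α ∈ R.rootStabilizer := by
  refine fun β => ⟨fun h => ?_, fun h => ?_⟩
  · have := R.reflect_mem α hα _ h
    rwa [← coroot_apply, ← reflect_apply, reflect, Submodule.reflection_reflection] at this
  · rw [reflect_apply]
    exact R.reflect_mem α hα β h

theorem weyl_le_rootStabilizer : R.weyl ≤ R.rootStabilizer :=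
  Subgroup.closure_le _ |>.2 fun _ ⟨_, hα, hs⟩ => hs ▸ R.reflect_mem_rootStabilizer hα

theorem inv_subset_pos (w : E ≃ₗᵢ[ℝ] E) : R.inv w ⊆ R.pos := Finset.filter_subset _ _

variable {R}

theorem image_inv_pos {w : E ≃ₗᵢ[ℝ] E} (hw : w ∈ R.weyl) :
    R.pos.image ⇑w⁻¹ = (R.pos \ R.inv w) ∪ (R.inv w).image Neg.neg := by
  ext β
  have hroots : β ∈ R.roots ↔ w β ∈ R.roots := (R.weyl_le_rootStabilizer hw β).symm
  rw [R.mem_roots_iff, R.mem_roots_iff] at hroots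
  have hβ := R.neg_notMem_pos (α := β)
  have hwβ := R.neg_notMem_pos (α := w β)
  have himage : β ∈ R.pos.image ⇑w⁻¹ ↔ w β ∈ R.pos := by
    rw [LinearIsometryEquiv.coe_inv, Finset.mem_image]
    exact ⟨by rintro ⟨α, hα, rfl⟩; simpa, fun h => ⟨w β, h, w.symm_apply_apply β⟩⟩
  have hneg : β ∈ (R.inv w).image Neg.neg ↔ -β ∈ R.pos ∧ w β ∈ R.pos := by
    simp [inv, neg_eq_iff_eq_neg]
  rw [himage, Finset.mem_union, Finset.mem_sdiff, hneg, inv, Finset.mem_filter]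
  tauto

theorem inv_apply_rho {w : E ≃ₗᵢ[ℝ] E} (hw : w ∈ R.weyl) : w⁻¹ R.rho = R.rho - R.invSum w := by
  have hdisj : Disjoint (R.pos \ R.inv w) ((R.inv w).image Neg.neg) := by
    refine Finset.disjoint_left.2 fun β hβ hneg => ?_
    obtain ⟨α, hα, rfl⟩ := Finset.mem_image.1 hneg
    exact R.neg_notMem_pos (R.inv_subset_pos w hα) (Finset.sdiff_subset hβ)
  have hsum : ∑ α ∈ R.pos, w⁻¹ α = ∑ α ∈ R.pos, α - (2 : ℝ) • R.invSum w := calc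
    _ = ∑ β ∈ R.pos.image ⇑w⁻¹, β := (Finset.sum_image fun _ _ _ _ h => w⁻¹.injective h).symm
    _ = _ := by
      rw [image_inv_pos hw, Finset.sum_union hdisj,
        Finset.sum_image fun _ _ _ _ h => neg_injective h,
        Finset.sum_sdiff_eq_sub (R.inv_subset_pos w), Finset.sum_neg_distrib, invSum]
      module
  rw [rho, map_smul, map_sum, hsum]
  module

theorem dot_inv {w : E ≃ₗᵢ[ℝ] E} (hw : w ∈ R.weyl) (l : E) :
    R.dot w⁻¹ l = w⁻¹ l - R.invSum w := by
  rw [dot, map_add, inv_apply_rho hw]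
  abel

theorem dot_sub_invSum {w : E ≃ₗᵢ[ℝ] E} (hw : w ∈ R.weyl) (l : E) :
    R.dot w (l - R.invSum w) = w l := by
  rw [dot, sub_add_eq_add_sub, add_sub_assoc, ← inv_apply_rho hw, map_add,
    LinearIsometryEquiv.coe_inv, w.apply_symm_apply, add_sub_cancel_right]

variable (R)

noncomputable def corootMap : E →ₗ[ℝ] (R.pos → ℝ) := LinearMap.pi fun α => coroot α.1

theorem corootMap_injective : Function.Injective R.corootMap := by
  refine (injective_iff_map_eq_zero _).2 fun x hx => ?_
  have hpos : ∀ α ∈ R.pos, ⟪x, α⟫_ℝ = 0 := fun α hα => by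
    simpa [corootMap, coroot_apply, R.ne_zero_of_mem_roots (R.pos_subset_roots hα)] using
      congrFun hx ⟨α, hα⟩
  have hroots : Set.EqOn (innerₛₗ ℝ x) (0 : E →ₗ[ℝ] ℝ) R.roots := fun α hα => by
    rcases R.mem_roots_iff.1 hα with h | h
    · simpa using hpos α h
    · simpa using hpos _ h
  simpa using LinearMap.congr_fun (LinearMap.ext_on R.span_top hroots) x

theorem isDominant_iff {l : E} : R.IsDominant l ↔ ∀ α ∈ R.pos, ∃ n : ℕ, (n : ℝ) = coroot α l := by
  refine ⟨fun ⟨hweight, hnonneg⟩ α hα => ?_, fun h => ⟨fun α hα => ?_, fun α hα => ?_⟩⟩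
  · obtain ⟨n, hn⟩ := hweight α (R.pos_subset_roots hα)
    have hn0 : (0 : ℝ) ≤ n :=
      hn ▸ div_nonneg (by linarith [hnonneg α hα]) (R.inner_self_pos (R.pos_subset_roots hα)).le
    lift n to ℕ using (by exact_mod_cast hn0)
    exact ⟨n, by rw [coroot_apply, hn, Int.cast_natCast]⟩
  · rcases R.mem_roots_iff.1 hα with hα | hα
    · obtain ⟨n, hn⟩ := h α hα
      exact ⟨n, by rw [← coroot_apply, ← hn, Int.cast_natCast]⟩
    · obtain ⟨n, hn⟩ := h _ hα
      exact ⟨-n, by rw [← coroot_apply, ← neg_neg (coroot α l), ← coroot_neg, ← hn]; simp⟩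
  · obtain ⟨n, hn⟩ := h α hα
    have hpos := R.inner_self_pos (R.pos_subset_roots hα)
    have : (0 : ℝ) ≤ coroot α l := hn ▸ n.cast_nonneg
    rw [coroot_apply, le_div_iff₀ hpos, zero_mul] at this
    linarith

end RootSystemData

section Pullback

open RootSystemData

variable {E F : Type*} [NormedAddCommGroup E] [InnerProductSpace ℝ E]
  [NormedAddCommGroup F] [InnerProductSpace ℝ F]

noncomputable def dominantPullback (R : RootSystemData E) (Rt : RootSystemData F)
    (g : F →ₗ[ℝ] E) : AddSubmonoid F :=
  (AddMonoidHom.mrange (((Nat.castAddMonoidHom ℝ).compLeft Rt.pos).prodMap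
    ((Nat.castAddMonoidHom ℝ).compLeft R.pos))).comap
    (Rt.corootMap.prod (R.corootMap ∘ₗ g)).toAddMonoidHom

theorem mem_dominantPullback {R : RootSystemData E} {Rt : RootSystemData F} {g : F →ₗ[ℝ] E}
    {x : F} : x ∈ dominantPullback R Rt g ↔ Rt.IsDominant x ∧ R.IsDominant (g x) := by
  rw [dominantPullback, AddSubmonoid.mem_comap, AddMonoidHom.mrange_prodMap, AddSubmonoid.mem_prod,
    AddMonoidHom.mem_mrange_compLeft_natCast, AddMonoidHom.mem_mrange_compLeft_natCast,
    isDominant_iff, isDominant_iff]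
  simp [corootMap]

theorem dominantPullback_fg (R : RootSystemData E) (Rt : RootSystemData F) (g : F →ₗ[ℝ] E) :
    (dominantPullback R Rt g).FG :=
  AddSubmonoid.fg_comap_mrange_of_injective _
    (fun _ _ h => Rt.corootMap_injective (congrArg Prod.fst h)) _

end Pullback

theorem D_w_wt_finitely_generated_submonoid_general
    {E F : Type*} [NormedAddCommGroup E] [InnerProductSpace ℝ E]
    [NormedAddCommGroup F] [InnerProductSpace ℝ F]
    (R : RootSystemData E) (Rt : RootSystemData F)
    (f : F →ₗ[ℝ] E)
    (w : E ≃ₗᵢ[ℝ] E) (hw : w ∈ R.weyl)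
    (wt : F ≃ₗᵢ[ℝ] F) (hwt : wt ∈ Rt.weyl)
    (hsum : f (Rt.invSum wt) = R.invSum w) :
    ∃ S : Finset (E × F),
      (AddSubmonoid.closure (S : Set (E × F)) : Set (E × F)) =
        {p : E × F | R.IsDominant p.1 ∧ Rt.IsDominant p.2 ∧
          p.1 = R.dot w (f (Rt.dot wt⁻¹ p.2))} := by
  let g : F →ₗ[ℝ] E := w.toLinearEquiv.toLinearMap ∘ₗ f ∘ₗ wt⁻¹.toLinearEquiv.toLinearMap
  have hdot (x : F) : R.dot w (f (Rt.dot wt⁻¹ x)) = g x := by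
    rw [Rt.dot_inv hwt, map_sub, hsum, R.dot_sub_invSum hw]
    rfl
  obtain ⟨S, hS⟩ := (dominantPullback_fg R Rt g).map (g.prod LinearMap.id).toAddMonoidHom
  refine ⟨S, ?_⟩
  ext ⟨μ, μt⟩
  simp only [hS, SetLike.mem_coe, AddSubmonoid.mem_map, mem_dominantPullback, hdot,
    Set.mem_ofPred_eq]
  constructor
  · rintro ⟨x, ⟨hx, hgx⟩, hxμ⟩
    obtain ⟨rfl, rfl⟩ := Prod.ext_iff.1 hxμ
    exact ⟨hgx, hx, rfl⟩
  · rintro ⟨hμ, hμt, rfl⟩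
    exact ⟨μt, ⟨hμt, hμ⟩, rfl⟩

/-- Lemma 2.7: if `f` is a linear map sending the weight lattice of `Δ̃` into that of `Δ`,
and `w ∈ W`, `w̃ ∈ W̃` satisfy `f(⟨Φ_{w̃}⟩) = ⟨Φ_w⟩`, then the set
`D_{w,w̃} = {(μ, μ̃) ∈ 𝒫⁺ × 𝒫̃⁺ : μ = w·(f(w̃⁻¹·μ̃))}` is a finitely generated submonoid
of `𝒫⁺ × 𝒫̃⁺`. -/
theorem D_w_wt_finitely_generated_submonoid
    {E F : Type*} [NormedAddCommGroup E] [InnerProductSpace ℝ E] [FiniteDimensional ℝ E]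
    [NormedAddCommGroup F] [InnerProductSpace ℝ F] [FiniteDimensional ℝ F]
    (R : RootSystemData E) (Rt : RootSystemData F)
    (f : F →ₗ[ℝ] E) (hf : ∀ l : F, Rt.IsWeight l → R.IsWeight (f l))
    (w : E ≃ₗᵢ[ℝ] E) (hw : w ∈ R.weyl)
    (wt : F ≃ₗᵢ[ℝ] F) (hwt : wt ∈ Rt.weyl)
    (hsum : f (Rt.invSum wt) = R.invSum w) :
    ∃ S : Finset (E × F),
      (AddSubmonoid.closure (S : Set (E × F)) : Set (E × F)) =
        {p : E × F | R.IsDominant p.1 ∧ Rt.IsDominant p.2 ∧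
          p.1 = R.dot w (f (Rt.dot wt⁻¹ p.2))} :=
  D_w_wt_finitely_generated_submonoid_general R Rt f w hw wt hwt hsum
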